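/- arXiv:hep-th/0510119 — 9 statements merged into one kernel-verified Lean document; each statement's English description precedes it below -/
import Mathlib

section
/- Let n ≥ 1, let A_a and A_b be real symmetric n×n matrices, and let θ₁ be a real antisymmetric n×n matrix. Define complex matrix P := 1_n + (√-1/2)(A_a + A_b)θ₁ and, for each i = 1,…,n, the operator ∇̄_i on smooth functions f : ℝⁿ → ℂ by (∇̄_i f)(x) := Σ_k P_{ik} ∂f/∂x_k (x) + 2π ((A_b − A_a)x)_i f(x). Then for all i, j and all smooth f, the commutator satisfies [∇̄_i, ∇̄_j] f = 2π√-1 (A_b θ₁ A_b − A_a θ₁ A_a)_{ij} · f. In particular, the operators ∇̄_1, …, ∇̄_n pairwise commute if and only if A_a θ₁ A_a = A_b θ₁ A_b. -/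
open Matrix

/-- The holomorphic structure operator of the Type θ₁ deformation:
`(∇̄_i f)(x) = Σ_k P_{ik} ∂f/∂x_k(x) + 2π ((A_b − A_a) x)_i f(x)`. -/
noncomputable def nablaBar {n : ℕ} (P : Matrix (Fin n) (Fin n) ℂ)
    (B : Matrix (Fin n) (Fin n) ℝ) (i : Fin n)
    (f : (Fin n → ℝ) → ℂ) : (Fin n → ℝ) → ℂ :=
  fun x => (∑ k, P i k * fderiv ℝ f x (Pi.single k 1))
    + 2 * (Real.pi : ℂ) * (((B.mulVec x) i : ℝ) : ℂ) * f x

section aux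
variable {n : ℕ}

/-- The linear map `y ↦ ((B.mulVec y) j : ℂ)` as a CLM. -/
noncomputable def mvCLM (B : Matrix (Fin n) (Fin n) ℝ) (j : Fin n) :
    (Fin n → ℝ) →L[ℝ] ℂ :=
  Complex.ofRealCLM.comp (LinearMap.toContinuousLinearMap
    ((LinearMap.proj j).comp B.mulVecLin))

lemma mvCLM_apply (B : Matrix (Fin n) (Fin n) ℝ) (j : Fin n) (y : Fin n → ℝ) :
    mvCLM B j y = ((B.mulVec y) j : ℝ) := by
  simp [mvCLM]

lemma mvCLM_single (B : Matrix (Fin n) (Fin n) ℝ) (j k : Fin n) :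
    mvCLM B j (Pi.single k 1) = ((B j k : ℝ) : ℂ) := by
  rw [mvCLM_apply, Matrix.mulVec_single]
  norm_num

lemma nablaBar_hasFDerivAt (P : Matrix (Fin n) (Fin n) ℂ)
    (B : Matrix (Fin n) (Fin n) ℝ) (j : Fin n) (f : (Fin n → ℝ) → ℂ)
    (hf : ContDiff ℝ (⊤ : ℕ∞) f) (x : Fin n → ℝ) :
    HasFDerivAt (nablaBar P B j f)
      ((∑ l, P j l • ((fderiv ℝ (fderiv ℝ f) x).flip (Pi.single l 1)))
        + ((2 * (Real.pi : ℂ) * (((B.mulVec x) j : ℝ) : ℂ)) • fderiv ℝ f x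
          + f x • ((2 * (Real.pi : ℂ)) • mvCLM B j))) x := by
  have hdf : ∀ y, HasFDerivAt f (fderiv ℝ f y) y := fun y =>
    (hf.differentiable (by simp) y).hasFDerivAt
  have hdf2 : HasFDerivAt (fderiv ℝ f) (fderiv ℝ (fderiv ℝ f) x) x :=
    (((hf.fderiv_right (m := 1) (WithTop.coe_le_coe.mpr le_top)).differentiable one_ne_zero) x).hasFDerivAt
  have h1 : ∀ l : Fin n, HasFDerivAt (fun y => fderiv ℝ f y (Pi.single l 1))
      ((fderiv ℝ (fderiv ℝ f) x).flip (Pi.single l 1)) x := by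
    intro l
    have := hdf2.clm_apply (hasFDerivAt_const (Pi.single l (1:ℝ)) x)
    simpa using this
  have hsum : HasFDerivAt (fun y => ∑ l, P j l * fderiv ℝ f y (Pi.single l 1))
      (∑ l, P j l • ((fderiv ℝ (fderiv ℝ f) x).flip (Pi.single l 1))) x :=
    HasFDerivAt.fun_sum fun l _ => (h1 l).const_mul (P j l)
  have hm : HasFDerivAt (fun y => 2 * (Real.pi : ℂ) * (((B.mulVec y) j : ℝ) : ℂ))
      ((2 * (Real.pi : ℂ)) • mvCLM B j) x := by
    have := ((mvCLM B j).hasFDerivAt (x := x)).const_mul (2 * (Real.pi : ℂ))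
    apply this.congr_fderiv rfl |>.congr_of_eventuallyEq ?_
    · filter_upwards with y; rw [mvCLM_apply]
  exact hsum.add (hm.mul (hdf x))
end aux

section aux2
variable {n : ℕ}

lemma fderiv_nablaBar_single (P : Matrix (Fin n) (Fin n) ℂ)
    (B : Matrix (Fin n) (Fin n) ℝ) (j : Fin n) (f : (Fin n → ℝ) → ℂ)
    (hf : ContDiff ℝ (⊤ : ℕ∞) f) (x : Fin n → ℝ) (k : Fin n) :
    fderiv ℝ (nablaBar P B j f) x (Pi.single k 1)
      = (∑ l, P j l * fderiv ℝ (fderiv ℝ f) x (Pi.single k 1) (Pi.single l 1))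
        + 2 * (Real.pi : ℂ) * (((B.mulVec x) j : ℝ) : ℂ)
            * fderiv ℝ f x (Pi.single k 1)
        + 2 * (Real.pi : ℂ) * ((B j k : ℝ) : ℂ) * f x := by
  rw [(nablaBar_hasFDerivAt P B j f hf x).fderiv]
  simp only [ContinuousLinearMap.add_apply, ContinuousLinearMap.coe_sum',
    Finset.sum_apply, ContinuousLinearMap.smul_apply, ContinuousLinearMap.flip_apply,
    mvCLM_single, smul_eq_mul]
  ring

lemma nablaBar_comm (P : Matrix (Fin n) (Fin n) ℂ)
    (B : Matrix (Fin n) (Fin n) ℝ) (i j : Fin n) (f : (Fin n → ℝ) → ℂ)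
    (hf : ContDiff ℝ (⊤ : ℕ∞) f) (x : Fin n → ℝ) :
    nablaBar P B i (nablaBar P B j f) x - nablaBar P B j (nablaBar P B i f) x
      = 2 * (Real.pi : ℂ) *
          ((∑ k, P i k * ((B j k : ℝ) : ℂ)) - ∑ k, P j k * ((B i k : ℝ) : ℂ)) * f x := by
  have hsym : ∀ k l : Fin n,
      fderiv ℝ (fderiv ℝ f) x (Pi.single k 1) (Pi.single l 1)
        = fderiv ℝ (fderiv ℝ f) x (Pi.single l 1) (Pi.single k 1) := by
    intro k l
    exact hf.contDiffAt.isSymmSndFDerivAt (by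
      rw [minSmoothness_of_isRCLikeNormedField]; exact WithTop.coe_le_coe.mpr le_top) _ _
  have expand : ∀ a b : Fin n,
      nablaBar P B a (nablaBar P B b f) x
        = (∑ k, ∑ l, P a k * (P b l *
              fderiv ℝ (fderiv ℝ f) x (Pi.single k 1) (Pi.single l 1)))
          + 2 * (Real.pi : ℂ) * (((B.mulVec x) b : ℝ) : ℂ) *
              (∑ k, P a k * fderiv ℝ f x (Pi.single k 1))
          + f x * (2 * (Real.pi : ℂ) * (∑ k, P a k * ((B b k : ℝ) : ℂ)))
          + 2 * (Real.pi : ℂ) * (((B.mulVec x) a : ℝ) : ℂ) *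
              ((∑ l, P b l * fderiv ℝ f x (Pi.single l 1))
                + 2 * (Real.pi : ℂ) * (((B.mulVec x) b : ℝ) : ℂ) * f x) := by
    intro a b
    show (∑ k, P a k * fderiv ℝ (nablaBar P B b f) x (Pi.single k 1))
        + 2 * (Real.pi : ℂ) * (((B.mulVec x) a : ℝ) : ℂ)
          * ((∑ l, P b l * fderiv ℝ f x (Pi.single l 1))
              + 2 * (Real.pi : ℂ) * (((B.mulVec x) b : ℝ) : ℂ) * f x) = _
    rw [Finset.sum_congr rfl fun k _ => by
      rw [fderiv_nablaBar_single P B b f hf x k]]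
    have split : ∀ k : Fin n, P a k *
        ((∑ l, P b l * fderiv ℝ (fderiv ℝ f) x (Pi.single k 1) (Pi.single l 1))
          + 2 * (Real.pi : ℂ) * (((B.mulVec x) b : ℝ) : ℂ)
              * fderiv ℝ f x (Pi.single k 1)
          + 2 * (Real.pi : ℂ) * ((B b k : ℝ) : ℂ) * f x)
        = (∑ l, P a k * (P b l *
              fderiv ℝ (fderiv ℝ f) x (Pi.single k 1) (Pi.single l 1)))
          + ((2 * (Real.pi : ℂ) * (((B.mulVec x) b : ℝ) : ℂ))
              * (P a k * fderiv ℝ f x (Pi.single k 1))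
            + f x * (2 * (Real.pi : ℂ) * (P a k * ((B b k : ℝ) : ℂ)))) := by
      intro k
      rw [mul_add, mul_add, Finset.mul_sum]
      ring
    rw [Finset.sum_congr rfl fun k _ => split k, Finset.sum_add_distrib,
      Finset.sum_add_distrib, ← Finset.mul_sum, ← Finset.mul_sum, ← Finset.mul_sum]
    ring
  have hdd : (∑ k, ∑ l, P i k * (P j l *
        fderiv ℝ (fderiv ℝ f) x (Pi.single k 1) (Pi.single l 1)))
      = (∑ k, ∑ l, P j k * (P i l *
        fderiv ℝ (fderiv ℝ f) x (Pi.single k 1) (Pi.single l 1))) := by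
    rw [Finset.sum_comm]
    refine Finset.sum_congr rfl fun k _ => Finset.sum_congr rfl fun l _ => ?_
    rw [hsym]
    ring
  rw [expand i j, expand j i, hdd]
  ring
end aux2

lemma typeTheta1_matrixPart {n : ℕ}
    (Aa Ab θ₁ : Matrix (Fin n) (Fin n) ℝ)
    (hAa : Aa.IsSymm) (hAb : Ab.IsSymm) (hθ : θ₁ᵀ = -θ₁)
    (P : Matrix (Fin n) (Fin n) ℂ)
    (hP : P = 1 + (Complex.I / 2) • (((Aa + Ab) * θ₁).map Complex.ofReal))
    (i j : Fin n) :
    (∑ k, P i k * (((Ab - Aa) j k : ℝ) : ℂ))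
      - (∑ k, P j k * (((Ab - Aa) i k : ℝ) : ℂ))
    = Complex.I * (((Ab * θ₁ * Ab - Aa * θ₁ * Aa) i j : ℝ) : ℂ) := by
  have hC : (Aa + Ab)ᵀ = Aa + Ab := by rw [transpose_add, hAa.eq, hAb.eq]
  have hD : (Ab - Aa)ᵀ = Ab - Aa := by rw [transpose_sub, hAa.eq, hAb.eq]
  have hmm : ∀ M N : Matrix (Fin n) (Fin n) ℝ,
      (M * N).map Complex.ofReal = M.map Complex.ofReal * N.map Complex.ofReal :=
    fun M N => Matrix.map_mul (f := Complex.ofRealHom)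
  have hX : P * ((Ab - Aa).map Complex.ofReal)
      = (Ab - Aa).map Complex.ofReal
        + (Complex.I / 2) • (((Aa + Ab) * θ₁ * (Ab - Aa)).map Complex.ofReal) := by
    rw [hP, add_mul, one_mul, smul_mul_assoc, ← hmm]
  have hXT : (P * ((Ab - Aa).map Complex.ofReal))ᵀ
      = (Ab - Aa).map Complex.ofReal
        - (Complex.I / 2) • (((Ab - Aa) * θ₁ * (Aa + Ab)).map Complex.ofReal) := by
    rw [hX, transpose_add, transpose_smul, ← Matrix.transpose_map,
      ← Matrix.transpose_map, hD, transpose_mul, transpose_mul, hθ, hC, hD]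
    rw [show (Ab - Aa) * (-θ₁ * (Aa + Ab)) = -((Ab - Aa) * θ₁ * (Aa + Ab)) by
      noncomm_ring]
    rw [show ((-((Ab - Aa) * θ₁ * (Aa + Ab))).map Complex.ofReal)
        = -(((Ab - Aa) * θ₁ * (Aa + Ab)).map Complex.ofReal) by
      ext a b; simp [Matrix.map_apply]]
    rw [smul_neg, ← sub_eq_add_neg]
  have key : P * ((Ab - Aa).map Complex.ofReal)
        - (P * ((Ab - Aa).map Complex.ofReal))ᵀ
      = Complex.I • ((Ab * θ₁ * Ab - Aa * θ₁ * Aa).map Complex.ofReal) := by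
    rw [hXT, hX]
    rw [show (Aa + Ab) * θ₁ * (Ab - Aa) = (Ab * θ₁ * Ab - Aa * θ₁ * Aa)
        + ((Aa * θ₁ * Ab - Ab * θ₁ * Aa)) by noncomm_ring,
      show (Ab - Aa) * θ₁ * (Aa + Ab) = (Ab * θ₁ * Ab - Aa * θ₁ * Aa)
        - ((Aa * θ₁ * Ab - Ab * θ₁ * Aa)) by noncomm_ring]
    have hadd : ∀ M N : Matrix (Fin n) (Fin n) ℝ,
        (M + N).map Complex.ofReal = M.map Complex.ofReal + N.map Complex.ofReal :=
      fun M N => by ext a b; simp [Matrix.map_apply]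
    have hsub : ∀ M N : Matrix (Fin n) (Fin n) ℝ,
        (M - N).map Complex.ofReal = M.map Complex.ofReal - N.map Complex.ofReal :=
      fun M N => by ext a b; simp [Matrix.map_apply]
    simp only [hadd, hsub, smul_add, smul_sub]
    module
  have e1 : ∀ a b : Fin n, (∑ k, P a k * (((Ab - Aa) b k : ℝ) : ℂ))
      = (P * ((Ab - Aa).map Complex.ofReal)) a b := by
    intro a b
    rw [Matrix.mul_apply]
    refine Finset.sum_congr rfl fun k _ => ?_
    rw [Matrix.map_apply,
      show (Ab - Aa) b k = (Ab - Aa) k b from (congrFun (congrFun hD b) k).symm]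
  rw [e1 i j, e1 j i,
    show (P * ((Ab - Aa).map Complex.ofReal)) j i
      = (P * ((Ab - Aa).map Complex.ofReal))ᵀ i j from rfl,
    ← Matrix.sub_apply, key, Matrix.smul_apply, Matrix.map_apply, smul_eq_mul]

/-- the commutator `[∇̄_i, ∇̄_j]` acts on smooth functions as
multiplication by `2π i (A_b θ₁ A_b − A_a θ₁ A_a)_{ij}`; in particular the
`∇̄_i` pairwise commute iff `A_a θ₁ A_a = A_b θ₁ A_b`. -/
theorem typeTheta1_curvature {n : ℕ} (hn : 1 ≤ n)
    (Aa Ab θ₁ : Matrix (Fin n) (Fin n) ℝ)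
    (hAa : Aa.IsSymm) (hAb : Ab.IsSymm) (hθ : θ₁ᵀ = -θ₁)
    (P : Matrix (Fin n) (Fin n) ℂ)
    (hP : P = 1 + (Complex.I / 2) • (((Aa + Ab) * θ₁).map Complex.ofReal)) :
    (∀ i j : Fin n, ∀ f : (Fin n → ℝ) → ℂ, ContDiff ℝ (⊤ : ℕ∞) f → ∀ x,
        nablaBar P (Ab - Aa) i (nablaBar P (Ab - Aa) j f) x
          - nablaBar P (Ab - Aa) j (nablaBar P (Ab - Aa) i f) x
        = 2 * (Real.pi : ℂ) * Complex.I *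
            (((Ab * θ₁ * Ab - Aa * θ₁ * Aa) i j : ℝ) : ℂ) * f x)
    ∧ ((∀ i j : Fin n, ∀ f : (Fin n → ℝ) → ℂ, ContDiff ℝ (⊤ : ℕ∞) f → ∀ x,
          nablaBar P (Ab - Aa) i (nablaBar P (Ab - Aa) j f) x
            = nablaBar P (Ab - Aa) j (nablaBar P (Ab - Aa) i f) x)
        ↔ Aa * θ₁ * Aa = Ab * θ₁ * Ab) := by
  have part1 : ∀ i j : Fin n, ∀ f : (Fin n → ℝ) → ℂ, ContDiff ℝ (⊤ : ℕ∞) f → ∀ x,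
      nablaBar P (Ab - Aa) i (nablaBar P (Ab - Aa) j f) x
        - nablaBar P (Ab - Aa) j (nablaBar P (Ab - Aa) i f) x
      = 2 * (Real.pi : ℂ) * Complex.I *
          (((Ab * θ₁ * Ab - Aa * θ₁ * Aa) i j : ℝ) : ℂ) * f x := by
    intro i j f hf x
    rw [nablaBar_comm P (Ab - Aa) i j f hf x,
      typeTheta1_matrixPart Aa Ab θ₁ hAa hAb hθ P hP i j]
    ring
  refine ⟨part1, ?_, ?_⟩
  · intro h
    ext i j
    have h1 := part1 i j (fun _ => 1) contDiff_const 0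
    rw [h i j (fun _ => 1) contDiff_const 0, sub_self] at h1
    have h2 : (((Ab * θ₁ * Ab - Aa * θ₁ * Aa) i j : ℝ) : ℂ) = 0 := by
      have h3 := h1.symm
      simp only [mul_one, mul_eq_zero, Complex.I_ne_zero, or_false,
        Complex.ofReal_eq_zero, OfNat.ofNat_ne_zero, false_or] at h3
      rcases h3 with h3 | h3
      · exact absurd h3 Real.pi_ne_zero
      · exact_mod_cast h3
    have h4 : (Ab * θ₁ * Ab - Aa * θ₁ * Aa) i j = 0 := by exact_mod_cast h2
    rw [Matrix.sub_apply, sub_eq_zero] at h4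
    exact h4.symm
  · intro heq i j f hf x
    have h1 := part1 i j f hf x
    rw [heq, sub_self] at h1
    simp only [Matrix.zero_apply, Complex.ofReal_zero, mul_zero, zero_mul] at h1
    exact sub_eq_zero.mp h1
end

section
/- Let A_a and A_b be real symmetric n×n matrices with A_ab := A_b − A_a, let θ₁ be a real antisymmetric n×n matrix, and assume the complex matrix 1_n + (√-1/2)(A_a + A_b)θ₁ is invertible. Define M := (1_n + (√-1/2)(A_a + A_b)θ₁)⁻¹ A_ab (a complex n×n matrix). Then M is symmetric (M = Mᵗ) if and only if A_a θ₁ A_a = A_b θ₁ A_b. -/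
open Matrix

/-- In the Type θ₁ deformation, the Gaussian covariance matrix
`M = (1 + (i/2)(A_a+A_b)θ₁)⁻¹ (A_b - A_a)` is symmetric iff `A_a θ₁ A_a = A_b θ₁ A_b`. -/
theorem typeTheta1_M_symm_iff {n : ℕ} (Aa Ab θ₁ : Matrix (Fin n) (Fin n) ℝ)
    (hAa : Aa.IsSymm) (hAb : Ab.IsSymm) (hθ : θ₁ᵀ = -θ₁)
    (P : Matrix (Fin n) (Fin n) ℂ)
    (hP : P = 1 + (Complex.I / 2) • (((Aa + Ab) * θ₁).map Complex.ofReal))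
    (hPinv : IsUnit P.det)
    (M : Matrix (Fin n) (Fin n) ℂ)
    (hM : M = P⁻¹ * ((Ab - Aa).map Complex.ofReal)) :
    M.IsSymm ↔ Aa * θ₁ * Aa = Ab * θ₁ * Ab := by
  set a : Matrix (Fin n) (Fin n) ℂ := Aa.map Complex.ofReal with ha
  set b : Matrix (Fin n) (Fin n) ℂ := Ab.map Complex.ofReal with hb
  set t : Matrix (Fin n) (Fin n) ℂ := θ₁.map Complex.ofReal with ht
  have mapf : ∀ X Y : Matrix (Fin n) (Fin n) ℝ, (X * Y).map Complex.ofReal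
      = X.map Complex.ofReal * Y.map Complex.ofReal := fun X Y => by
    exact Matrix.map_mul (f := Complex.ofRealHom)
  have haT : aᵀ = a := by
    rw [ha, ← Matrix.transpose_map]
    exact congrArg (fun X => Matrix.map X Complex.ofReal) hAa
  have hbT : bᵀ = b := by
    rw [hb, ← Matrix.transpose_map]
    exact congrArg (fun X => Matrix.map X Complex.ofReal) hAb
  have htT : tᵀ = -t := by
    rw [ht, ← Matrix.transpose_map, hθ]; ext i j; simp
  have hD : (Ab - Aa).map Complex.ofReal = b - a := by
    ext i j; simp [ha, hb]
  have hS : (Aa + Ab).map Complex.ofReal = a + b := by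
    ext i j; simp [ha, hb]
  have hPe : P = 1 + (Complex.I / 2) • ((a + b) * t) := by
    rw [hP, mapf, hS, ← ht]
  have hPT : IsUnit Pᵀ.det := by rwa [Matrix.det_transpose]
  have hDT : ((Ab - Aa).map Complex.ofReal)ᵀ = (Ab - Aa).map Complex.ofReal := by
    rw [hD, Matrix.transpose_sub, haT, hbT]
  -- step 1 : M.IsSymm ↔ P * (b - a) = (b - a) * Pᵀ
  have step1 : M.IsSymm ↔ P * (b - a) = (b - a) * Pᵀ := by
    rw [Matrix.IsSymm, hM, Matrix.transpose_mul, Matrix.transpose_nonsing_inv, hDT, hD]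
    constructor
    · intro h
      have h1 := congrArg (fun X => P * X * Pᵀ) h
      simpa [Matrix.mul_assoc, Matrix.mul_nonsing_inv_cancel_left _ _ hPT,
        Matrix.mul_nonsing_inv_cancel_left _ _ hPinv,
        Matrix.nonsing_inv_mul_cancel_right _ _ hPT,
        ← Matrix.mul_assoc] using h1
    · intro h
      have h1 := congrArg (fun X => P⁻¹ * X * Pᵀ⁻¹) h
      simpa [Matrix.mul_assoc, Matrix.nonsing_inv_mul_cancel_left _ _ hPinv,
        Matrix.mul_nonsing_inv_cancel_right _ _ hPT,
        Matrix.nonsing_inv_mul_cancel_right _ _ hPT] using h1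
  have hPTe : Pᵀ = 1 - (Complex.I / 2) • (t * (a + b)) := by
    rw [hPe, Matrix.transpose_add, Matrix.transpose_one, Matrix.transpose_smul,
      Matrix.transpose_mul, htT, Matrix.transpose_add, haT, hbT]
    rw [Matrix.neg_mul, smul_neg, sub_eq_add_neg]
  have hne : (Complex.I / 2 : ℂ) ≠ 0 := by simp [Complex.I_ne_zero]
  -- step 2
  have hL : P * (b - a) - (b - a) * Pᵀ
      = (Complex.I / 2) • ((a + b) * t * (b - a) + (b - a) * (t * (a + b))) := by
    rw [hPTe, hPe, add_mul (1 : Matrix (Fin n) (Fin n) ℂ) _ (b - a), one_mul,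
      mul_sub (b - a) 1 _, mul_one, Matrix.smul_mul, Matrix.mul_smul, smul_add]
    abel
  have step2 : (P * (b - a) = (b - a) * Pᵀ) ↔ a * t * a = b * t * b := by
    rw [← sub_eq_zero, hL, smul_eq_zero, or_iff_right hne]
    have expand2 : (a + b) * t * (b - a) + (b - a) * (t * (a + b))
        = (2 : ℂ) • (b * t * b - a * t * a) := by
      rw [two_smul]; noncomm_ring
    rw [expand2, smul_eq_zero, or_iff_right (two_ne_zero), sub_eq_zero, eq_comm]
  rw [step1, step2]
  constructor
  · intro h
    apply Matrix.map_injective (f := Complex.ofReal) Complex.ofReal_injective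
    simp only [mapf, ← ha, ← hb, ← ht]
    rw [h]
  · intro h
    have h1 := congrArg (fun X => Matrix.map X Complex.ofReal) h
    simpa [mapf, ← ha, ← hb, ← ht] using h1
end

section
/- Let A_a and A_b be real symmetric n×n matrices with A_ab := A_b − A_a invertible, let θ₁ be a real antisymmetric n×n matrix such that A_a θ₁ A_a = A_b θ₁ A_b, and assume 1_n + (√-1/2)(A_a + A_b)θ₁ is invertible over ℂ. Then the complex matrix A_ab + (√-1/2)(A_a θ₁ A_b − A_b θ₁ A_a) is invertible and (1_n + (√-1/2)(A_a + A_b)θ₁)⁻¹ A_ab = A_ab (A_ab + (√-1/2)(A_a θ₁ A_b − A_b θ₁ A_a))⁻¹ A_ab. -/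
open Matrix

/-- Explicit closed formula for the Gaussian covariance matrix of
theta vectors in the Type θ₁ deformation, under the DG condition
`A_a θ₁ A_a = A_b θ₁ A_b`. -/
theorem typeTheta1_M_explicit {n : ℕ} (Aa Ab θ₁ : Matrix (Fin n) (Fin n) ℝ)
    (hAa : Aa.IsSymm) (hAb : Ab.IsSymm) (hθ : θ₁ᵀ = -θ₁)
    (hAab : IsUnit (Ab - Aa).det)
    (hcd : Aa * θ₁ * Aa = Ab * θ₁ * Ab)
    (hPinv : IsUnit (1 + (Complex.I / 2) •
      (((Aa + Ab) * θ₁).map Complex.ofReal) : Matrix (Fin n) (Fin n) ℂ).det) :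
    IsUnit ((Ab - Aa).map Complex.ofReal + (Complex.I / 2) •
        ((Aa * θ₁ * Ab - Ab * θ₁ * Aa).map Complex.ofReal)).det ∧
    (1 + (Complex.I / 2) • (((Aa + Ab) * θ₁).map Complex.ofReal) :
        Matrix (Fin n) (Fin n) ℂ)⁻¹ * ((Ab - Aa).map Complex.ofReal)
      = ((Ab - Aa).map Complex.ofReal) *
        ((Ab - Aa).map Complex.ofReal + (Complex.I / 2) •
          ((Aa * θ₁ * Ab - Ab * θ₁ * Aa).map Complex.ofReal))⁻¹ *
        ((Ab - Aa).map Complex.ofReal) := by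
  set f := Complex.ofRealHom
  have hmap : ∀ X : Matrix (Fin n) (Fin n) ℝ, X.map Complex.ofReal = X.map f := by
    intro X; rfl
  set C : Matrix (Fin n) (Fin n) ℂ := (Ab - Aa).map Complex.ofReal with hC
  set S : Matrix (Fin n) (Fin n) ℂ := ((Aa + Ab) * θ₁).map Complex.ofReal with hS
  set P : Matrix (Fin n) (Fin n) ℂ := 1 + (Complex.I / 2) • S with hP
  set Q : Matrix (Fin n) (Fin n) ℂ :=
    C + (Complex.I / 2) • ((Aa * θ₁ * Ab - Ab * θ₁ * Aa).map Complex.ofReal) with hQ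
  -- real identity
  have hreal : ((Aa + Ab) * θ₁) * (Ab - Aa) = Aa * θ₁ * Ab - Ab * θ₁ * Aa := by
    have : (Aa + Ab) * θ₁ * (Ab - Aa)
        = Aa * θ₁ * Ab - Aa * θ₁ * Aa + Ab * θ₁ * Ab - Ab * θ₁ * Aa := by
      noncomm_ring
    rw [this, hcd]; abel
  have hfact : Q = P * C := by
    have hmul : S * C = (Aa * θ₁ * Ab - Ab * θ₁ * Aa).map Complex.ofReal := by
      rw [hS, hC, hmap, hmap, hmap, ← Matrix.map_mul, hreal]
    rw [hQ, hP, Matrix.add_mul, Matrix.one_mul, Matrix.smul_mul, hmul]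
  have hCdet : IsUnit C.det := by
    have h : C.det = f ((Ab - Aa).det) := (RingHom.map_det f (Ab - Aa)).symm
    rw [h]; exact hAab.map f
  have hQdet : IsUnit Q.det := by
    rw [hfact, Matrix.det_mul]
    exact hPinv.mul hCdet
  refine ⟨hQdet, ?_⟩
  have : Q⁻¹ = C⁻¹ * P⁻¹ := by rw [hfact, Matrix.mul_inv_rev]
  rw [this, ← Matrix.mul_assoc, Matrix.mul_nonsing_inv _ hCdet, Matrix.one_mul]
end

section
/- Let A_a, A_b be invertible real symmetric n×n matrices and θ₂ a real antisymmetric n×n matrix such that 1_n + A_b θ₂ and 1_n + θ₂ A_a are invertible. Set M := (1_n + A_b θ₂)⁻¹ (A_b − A_a) (1_n + θ₂ A_a)⁻¹. Then M is symmetric (M = Mᵗ) if and only if A_a θ₂ A_a = A_b θ₂ A_b. -/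
open Matrix

/-- For antisymmetric θ₂, the Type θ₂ Gaussian covariance matrix
`M = (1 + A_b θ₂)⁻¹ (A_b − A_a) (1 + θ₂ A_a)⁻¹` is symmetric iff
`A_a θ₂ A_a = A_b θ₂ A_b`. -/
theorem typeTheta2_M_symm_iff {n : ℕ} (Aa Ab θ₂ : Matrix (Fin n) (Fin n) ℝ)
    (hAa : Aa.IsSymm) (hAb : Ab.IsSymm) (hθ : θ₂ᵀ = -θ₂)
    (hAaInv : IsUnit Aa.det) (hAbInv : IsUnit Ab.det)
    (h1 : IsUnit (1 + Ab * θ₂).det) (h2 : IsUnit (1 + θ₂ * Aa).det)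
    (M : Matrix (Fin n) (Fin n) ℝ)
    (hM : M = (1 + Ab * θ₂)⁻¹ * (Ab - Aa) * (1 + θ₂ * Aa)⁻¹) :
    M.IsSymm ↔ Aa * θ₂ * Aa = Ab * θ₂ * Ab := by
  -- transposes of the basic factors
  have htX : (1 + Ab * θ₂)ᵀ = 1 - θ₂ * Ab := by
    rw [transpose_add, transpose_one, transpose_mul, hθ, hAb.eq]
    noncomm_ring
  have htY : (1 + θ₂ * Aa)ᵀ = 1 - Aa * θ₂ := by
    rw [transpose_add, transpose_one, transpose_mul, hθ, hAa.eq]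
    noncomm_ring
  -- invertibility of all factors
  have uB : IsUnit (1 - θ₂ * Ab).det := by rw [← htX, det_transpose]; exact h1
  have uP : IsUnit (1 - Aa * θ₂).det := by rw [← htY, det_transpose]; exact h2
  have uW : IsUnit (1 - Ab * θ₂).det := by rw [det_one_sub_mul_comm]; exact uB
  have uQ : IsUnit (1 - θ₂ * Aa).det := by rw [det_one_sub_mul_comm]; exact uP
  -- Step A : split M
  have hA : M = (1 + Ab * θ₂)⁻¹ * Ab - Aa * (1 + θ₂ * Aa)⁻¹ := by
    rw [hM]
    have e1 : Ab - Aa = Ab * (1 + θ₂ * Aa) - (1 + Ab * θ₂) * Aa := by noncomm_ring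
    calc (1 + Ab * θ₂)⁻¹ * (Ab - Aa) * (1 + θ₂ * Aa)⁻¹
        = (1 + Ab * θ₂)⁻¹ * Ab * ((1 + θ₂ * Aa) * (1 + θ₂ * Aa)⁻¹)
            - ((1 + Ab * θ₂)⁻¹ * (1 + Ab * θ₂)) * (Aa * (1 + θ₂ * Aa)⁻¹) := by
          rw [e1]; noncomm_ring
      _ = (1 + Ab * θ₂)⁻¹ * Ab - Aa * (1 + θ₂ * Aa)⁻¹ := by
          rw [mul_nonsing_inv _ h2, nonsing_inv_mul _ h1, mul_one, one_mul]
  -- Step B : transpose of M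
  have hB : Mᵀ = Ab * (1 - θ₂ * Ab)⁻¹ - (1 - Aa * θ₂)⁻¹ * Aa := by
    rw [hA, transpose_sub, transpose_mul, transpose_mul, transpose_nonsing_inv,
      transpose_nonsing_inv, htX, htY, hAa.eq, hAb.eq]
  -- Step C
  have hC : (1 + Ab * θ₂)⁻¹ * Ab - Ab * (1 - θ₂ * Ab)⁻¹
      = -((1 + Ab * θ₂)⁻¹ * (Ab * θ₂ * Ab + Ab * θ₂ * Ab) * (1 - θ₂ * Ab)⁻¹) := by
    have e2 : Ab * (1 - θ₂ * Ab) - (1 + Ab * θ₂) * Ab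
        = -(Ab * θ₂ * Ab + Ab * θ₂ * Ab) := by noncomm_ring
    calc (1 + Ab * θ₂)⁻¹ * Ab - Ab * (1 - θ₂ * Ab)⁻¹
        = (1 + Ab * θ₂)⁻¹ * Ab * ((1 - θ₂ * Ab) * (1 - θ₂ * Ab)⁻¹)
            - ((1 + Ab * θ₂)⁻¹ * (1 + Ab * θ₂)) * (Ab * (1 - θ₂ * Ab)⁻¹) := by
          rw [mul_nonsing_inv _ uB, nonsing_inv_mul _ h1, mul_one, one_mul]
      _ = (1 + Ab * θ₂)⁻¹ * (Ab * (1 - θ₂ * Ab) - (1 + Ab * θ₂) * Ab) * (1 - θ₂ * Ab)⁻¹ := by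
          noncomm_ring
      _ = -((1 + Ab * θ₂)⁻¹ * (Ab * θ₂ * Ab + Ab * θ₂ * Ab) * (1 - θ₂ * Ab)⁻¹) := by
          rw [e2]; noncomm_ring
  -- Step D
  have hD : Aa * (1 + θ₂ * Aa)⁻¹ - (1 - Aa * θ₂)⁻¹ * Aa
      = -((1 - Aa * θ₂)⁻¹ * (Aa * θ₂ * Aa + Aa * θ₂ * Aa) * (1 + θ₂ * Aa)⁻¹) := by
    have e3 : (1 - Aa * θ₂) * Aa - Aa * (1 + θ₂ * Aa)
        = -(Aa * θ₂ * Aa + Aa * θ₂ * Aa) := by noncomm_ring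
    calc Aa * (1 + θ₂ * Aa)⁻¹ - (1 - Aa * θ₂)⁻¹ * Aa
        = ((1 - Aa * θ₂)⁻¹ * (1 - Aa * θ₂)) * (Aa * (1 + θ₂ * Aa)⁻¹)
            - (1 - Aa * θ₂)⁻¹ * Aa * ((1 + θ₂ * Aa) * (1 + θ₂ * Aa)⁻¹) := by
          rw [nonsing_inv_mul _ uP, mul_nonsing_inv _ h2, mul_one, one_mul]
      _ = (1 - Aa * θ₂)⁻¹ * ((1 - Aa * θ₂) * Aa - Aa * (1 + θ₂ * Aa)) * (1 + θ₂ * Aa)⁻¹ := by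
          noncomm_ring
      _ = -((1 - Aa * θ₂)⁻¹ * (Aa * θ₂ * Aa + Aa * θ₂ * Aa) * (1 + θ₂ * Aa)⁻¹) := by
          rw [e3]; noncomm_ring
  -- difference
  have hdiff : Mᵀ - M
      = (1 + Ab * θ₂)⁻¹ * (Ab * θ₂ * Ab + Ab * θ₂ * Ab) * (1 - θ₂ * Ab)⁻¹
        - (1 - Aa * θ₂)⁻¹ * (Aa * θ₂ * Aa + Aa * θ₂ * Aa) * (1 + θ₂ * Aa)⁻¹ := by
    have e4 : Mᵀ - M = -((1 + Ab * θ₂)⁻¹ * Ab - Ab * (1 - θ₂ * Ab)⁻¹)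
        + (Aa * (1 + θ₂ * Aa)⁻¹ - (1 - Aa * θ₂)⁻¹ * Aa) := by
      rw [hB, hA]; abel
    rw [e4, hC, hD]; abel
  -- push-through for the first term
  have t1 : ((1 - Ab * θ₂) * (1 + Ab * θ₂))
        * ((1 + Ab * θ₂)⁻¹ * (Ab * θ₂ * Ab + Ab * θ₂ * Ab) * (1 - θ₂ * Ab)⁻¹)
        * ((1 + θ₂ * Aa) * (1 - θ₂ * Aa))
      = (Ab * θ₂ * Ab + Ab * θ₂ * Ab) * ((1 + θ₂ * Aa) * (1 - θ₂ * Aa)) := by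
    have e5 : (1 - Ab * θ₂) * (Ab * θ₂ * Ab + Ab * θ₂ * Ab)
        = (Ab * θ₂ * Ab + Ab * θ₂ * Ab) * (1 - θ₂ * Ab) := by noncomm_ring
    calc ((1 - Ab * θ₂) * (1 + Ab * θ₂))
          * ((1 + Ab * θ₂)⁻¹ * (Ab * θ₂ * Ab + Ab * θ₂ * Ab) * (1 - θ₂ * Ab)⁻¹)
          * ((1 + θ₂ * Aa) * (1 - θ₂ * Aa))
        = (1 - Ab * θ₂) * (((1 + Ab * θ₂) * (1 + Ab * θ₂)⁻¹)
            * ((Ab * θ₂ * Ab + Ab * θ₂ * Ab) * (1 - θ₂ * Ab)⁻¹))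
            * ((1 + θ₂ * Aa) * (1 - θ₂ * Aa)) := by noncomm_ring
      _ = ((1 - Ab * θ₂) * (Ab * θ₂ * Ab + Ab * θ₂ * Ab)) * (1 - θ₂ * Ab)⁻¹
            * ((1 + θ₂ * Aa) * (1 - θ₂ * Aa)) := by
          rw [mul_nonsing_inv _ h1, one_mul]; noncomm_ring
      _ = (Ab * θ₂ * Ab + Ab * θ₂ * Ab) * ((1 - θ₂ * Ab) * (1 - θ₂ * Ab)⁻¹)
            * ((1 + θ₂ * Aa) * (1 - θ₂ * Aa)) := by rw [e5]; noncomm_ring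
      _ = (Ab * θ₂ * Ab + Ab * θ₂ * Ab) * ((1 + θ₂ * Aa) * (1 - θ₂ * Aa)) := by
          rw [mul_nonsing_inv _ uB, mul_one]
  -- push-through for the second term
  have t2 : ((1 - Ab * θ₂) * (1 + Ab * θ₂))
        * ((1 - Aa * θ₂)⁻¹ * (Aa * θ₂ * Aa + Aa * θ₂ * Aa) * (1 + θ₂ * Aa)⁻¹)
        * ((1 + θ₂ * Aa) * (1 - θ₂ * Aa))
      = ((1 - Ab * θ₂) * (1 + Ab * θ₂)) * (Aa * θ₂ * Aa + Aa * θ₂ * Aa) := by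
    have e6 : (1 - Aa * θ₂) * (Aa * θ₂ * Aa + Aa * θ₂ * Aa)
        = (Aa * θ₂ * Aa + Aa * θ₂ * Aa) * (1 - θ₂ * Aa) := by noncomm_ring
    have p2 : (1 - Aa * θ₂)⁻¹ * (Aa * θ₂ * Aa + Aa * θ₂ * Aa)
        = (Aa * θ₂ * Aa + Aa * θ₂ * Aa) * (1 - θ₂ * Aa)⁻¹ := by
      calc (1 - Aa * θ₂)⁻¹ * (Aa * θ₂ * Aa + Aa * θ₂ * Aa)
          = (1 - Aa * θ₂)⁻¹ * ((Aa * θ₂ * Aa + Aa * θ₂ * Aa) * ((1 - θ₂ * Aa) * (1 - θ₂ * Aa)⁻¹)) := by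
            rw [mul_nonsing_inv _ uQ, mul_one]
        _ = (1 - Aa * θ₂)⁻¹ * ((1 - Aa * θ₂) * ((Aa * θ₂ * Aa + Aa * θ₂ * Aa) * (1 - θ₂ * Aa)⁻¹)) := by
            rw [show (Aa * θ₂ * Aa + Aa * θ₂ * Aa) * ((1 - θ₂ * Aa) * (1 - θ₂ * Aa)⁻¹)
              = ((Aa * θ₂ * Aa + Aa * θ₂ * Aa) * (1 - θ₂ * Aa)) * (1 - θ₂ * Aa)⁻¹ from by noncomm_ring,
              ← e6]
            noncomm_ring
        _ = (Aa * θ₂ * Aa + Aa * θ₂ * Aa) * (1 - θ₂ * Aa)⁻¹ := by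
            rw [← Matrix.mul_assoc, nonsing_inv_mul _ uP, one_mul]
    calc ((1 - Ab * θ₂) * (1 + Ab * θ₂))
          * ((1 - Aa * θ₂)⁻¹ * (Aa * θ₂ * Aa + Aa * θ₂ * Aa) * (1 + θ₂ * Aa)⁻¹)
          * ((1 + θ₂ * Aa) * (1 - θ₂ * Aa))
        = ((1 - Ab * θ₂) * (1 + Ab * θ₂))
            * ((1 - Aa * θ₂)⁻¹ * (Aa * θ₂ * Aa + Aa * θ₂ * Aa))
            * (((1 + θ₂ * Aa)⁻¹ * (1 + θ₂ * Aa)) * (1 - θ₂ * Aa)) := by noncomm_ring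
      _ = ((1 - Ab * θ₂) * (1 + Ab * θ₂))
            * ((Aa * θ₂ * Aa + Aa * θ₂ * Aa) * (1 - θ₂ * Aa)⁻¹) * (1 - θ₂ * Aa) := by
          rw [p2, nonsing_inv_mul _ h2, one_mul]
      _ = ((1 - Ab * θ₂) * (1 + Ab * θ₂)) * (Aa * θ₂ * Aa + Aa * θ₂ * Aa)
            * ((1 - θ₂ * Aa)⁻¹ * (1 - θ₂ * Aa)) := by noncomm_ring
      _ = ((1 - Ab * θ₂) * (1 + Ab * θ₂)) * (Aa * θ₂ * Aa + Aa * θ₂ * Aa) := by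
          rw [nonsing_inv_mul _ uQ, mul_one]
  -- the key sandwich identity
  have key : ((1 - Ab * θ₂) * (1 + Ab * θ₂)) * (Mᵀ - M) * ((1 + θ₂ * Aa) * (1 - θ₂ * Aa))
      = (Ab * θ₂ * Ab + Ab * θ₂ * Ab) - (Aa * θ₂ * Aa + Aa * θ₂ * Aa) := by
    rw [hdiff, mul_sub, sub_mul, t1, t2]
    noncomm_ring
  constructor
  · intro hs
    have h0 : ((1 - Ab * θ₂) * (1 + Ab * θ₂)) * (Mᵀ - M) * ((1 + θ₂ * Aa) * (1 - θ₂ * Aa)) = 0 := by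
      rw [hs.eq, sub_self, Matrix.mul_zero, Matrix.zero_mul]
    have h5 : (Ab * θ₂ * Ab + Ab * θ₂ * Ab) - (Aa * θ₂ * Aa + Aa * θ₂ * Aa) = 0 :=
      key ▸ h0
    have h6 : Ab * θ₂ * Ab + Ab * θ₂ * Ab = Aa * θ₂ * Aa + Aa * θ₂ * Aa := sub_eq_zero.mp h5
    ext i j
    have h7 : (Ab * θ₂ * Ab + Ab * θ₂ * Ab) i j = (Aa * θ₂ * Aa + Aa * θ₂ * Aa) i j := by rw [h6]
    simp only [Matrix.add_apply] at h7
    linarith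
  · intro hg
    have h0 : ((1 - Ab * θ₂) * (1 + Ab * θ₂)) * (Mᵀ - M) * ((1 + θ₂ * Aa) * (1 - θ₂ * Aa)) = 0 := by
      rw [key, hg, sub_self]
    have uWX : IsUnit ((1 - Ab * θ₂) * (1 + Ab * θ₂)).det := by
      rw [det_mul]; exact uW.mul h1
    have uYQ : IsUnit ((1 + θ₂ * Aa) * (1 - θ₂ * Aa)).det := by
      rw [det_mul]; exact h2.mul uQ
    have hz : Mᵀ - M = 0 := by
      calc Mᵀ - M
          = (((1 - Ab * θ₂) * (1 + Ab * θ₂))⁻¹ * ((1 - Ab * θ₂) * (1 + Ab * θ₂)))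
            * (Mᵀ - M)
            * (((1 + θ₂ * Aa) * (1 - θ₂ * Aa)) * ((1 + θ₂ * Aa) * (1 - θ₂ * Aa))⁻¹) := by
            rw [nonsing_inv_mul _ uWX, mul_nonsing_inv _ uYQ, one_mul, mul_one]
        _ = ((1 - Ab * θ₂) * (1 + Ab * θ₂))⁻¹
            * (((1 - Ab * θ₂) * (1 + Ab * θ₂)) * (Mᵀ - M) * ((1 + θ₂ * Aa) * (1 - θ₂ * Aa)))
            * ((1 + θ₂ * Aa) * (1 - θ₂ * Aa))⁻¹ := by noncomm_ring
        _ = 0 := by rw [h0, Matrix.mul_zero, Matrix.zero_mul]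
    exact sub_eq_zero.mp hz
end

section
/- Let A_a, A_b, A_c be invertible real symmetric n×n matrices such that A_ab := A_b − A_a and A_bc := A_c − A_b are invertible, and let θ₂ be a real antisymmetric n×n matrix with A_a θ₂ A_a = A_b θ₂ A_b = A_c θ₂ A_c and with 1_n + A_b θ₂ and 1_n − θ₂ A_b invertible. Then (A_ab⁻¹ + A_bc⁻¹)(1_n + A_b θ₂ᵗ)(1_n + A_b θ₂)⁻¹ = (1_n − θ₂ A_b)⁻¹ (1_n − θ₂ᵗ A_b)(A_ab⁻¹ + A_bc⁻¹); equivalently, the matrix (A_ab⁻¹ + A_bc⁻¹)(1_n + A_b θ₂ᵗ)(1_n + A_b θ₂)⁻¹ defining the quadratic form in the composition formula of theta vectors is symmetric. -/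
open Matrix

/-- In the Type θ₂ deformation (θ₂ antisymmetric), under the
DG condition `A_a θ₂ A_a = A_b θ₂ A_b = A_c θ₂ A_c`, the matrix
`(A_ab⁻¹ + A_bc⁻¹)(1 + A_b θ₂ᵀ)(1 + A_b θ₂)⁻¹` appearing in the composition
formula of theta vectors is symmetric. -/
theorem typeTheta2_structureConstant_symm {n : ℕ}
    (Aa Ab Ac θ₂ : Matrix (Fin n) (Fin n) ℝ)
    (hAa : Aa.IsSymm) (hAb : Ab.IsSymm) (hAc : Ac.IsSymm)
    (hAaInv : IsUnit Aa.det) (hAbInv : IsUnit Ab.det) (hAcInv : IsUnit Ac.det)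
    (hAab : IsUnit (Ab - Aa).det) (hAbc : IsUnit (Ac - Ab).det)
    (hθ : θ₂ᵀ = -θ₂)
    (hcd1 : Aa * θ₂ * Aa = Ab * θ₂ * Ab) (hcd2 : Ab * θ₂ * Ab = Ac * θ₂ * Ac)
    (h1 : IsUnit (1 + Ab * θ₂).det) (h2 : IsUnit (1 - θ₂ * Ab).det) :
    ((Ab - Aa)⁻¹ + (Ac - Ab)⁻¹) * (1 + Ab * θ₂ᵀ) * (1 + Ab * θ₂)⁻¹
      = (1 - θ₂ * Ab)⁻¹ * (1 - θ₂ᵀ * Ab) * ((Ab - Aa)⁻¹ + (Ac - Ab)⁻¹) ∧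
    (((Ab - Aa)⁻¹ + (Ac - Ab)⁻¹) * (1 + Ab * θ₂ᵀ) * (1 + Ab * θ₂)⁻¹).IsSymm := by
  set M := Ab - Aa with hMdef
  set N := Ac - Ab with hNdef
  set S := M⁻¹ + N⁻¹ with hSdef
  have cM2 : ∀ X : Matrix (Fin n) (Fin n) ℝ, X * M * M⁻¹ = X :=
    fun X => Matrix.mul_nonsing_inv_cancel_right M X hAab
  have cN2 : ∀ X : Matrix (Fin n) (Fin n) ℝ, X * N * N⁻¹ = X :=
    fun X => Matrix.mul_nonsing_inv_cancel_right N X hAbc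
  -- key commutation identities from the DG condition
  have hM : M * θ₂ * Ab + Ab * θ₂ * M = M * θ₂ * M := by
    have h0 : M * θ₂ * Ab + Ab * θ₂ * M - M * θ₂ * M
        = Ab * θ₂ * Ab - Aa * θ₂ * Aa := by
      rw [hMdef]; noncomm_ring
    rw [← hcd1, sub_self] at h0
    exact sub_eq_zero.mp h0
  have hN : N * θ₂ * Ab + Ab * θ₂ * N = -(N * θ₂ * N) := by
    have h0 : N * θ₂ * Ab + Ab * θ₂ * N + N * θ₂ * N
        = Ac * θ₂ * Ac - Ab * θ₂ * Ab := by
      rw [hNdef]; noncomm_ring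
    rw [← hcd2, sub_self] at h0
    exact eq_neg_of_add_eq_zero_left h0
  have keyM : θ₂ * Ab * M⁻¹ + M⁻¹ * Ab * θ₂ = θ₂ := by
    have e := congrArg (fun X => M⁻¹ * X * M⁻¹) hM
    simp only [Matrix.mul_add, Matrix.add_mul, ← Matrix.mul_assoc,
      Matrix.nonsing_inv_mul M hAab, Matrix.one_mul] at e
    rw [cM2, cM2] at e
    exact e
  have keyN : θ₂ * Ab * N⁻¹ + N⁻¹ * Ab * θ₂ = -θ₂ := by
    have e := congrArg (fun X => N⁻¹ * X * N⁻¹) hN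
    simp only [Matrix.mul_add, Matrix.add_mul, Matrix.mul_neg, Matrix.neg_mul,
      ← Matrix.mul_assoc, Matrix.nonsing_inv_mul N hAbc, Matrix.one_mul] at e
    rw [cN2, cN2] at e
    exact e
  have key : θ₂ * Ab * S + S * (Ab * θ₂) = 0 := by
    have h0 : θ₂ * Ab * S + S * (Ab * θ₂)
        = (θ₂ * Ab * M⁻¹ + M⁻¹ * Ab * θ₂) + (θ₂ * Ab * N⁻¹ + N⁻¹ * Ab * θ₂) := by
      rw [hSdef]; noncomm_ring
    rw [h0, keyM, keyN, add_neg_cancel]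
  -- the central balanced identity
  have main' : (1 - θ₂ * Ab) * S * (1 - Ab * θ₂) = (1 + θ₂ * Ab) * S * (1 + Ab * θ₂) := by
    have hd : (1 - θ₂ * Ab) * S * (1 - Ab * θ₂) - (1 + θ₂ * Ab) * S * (1 + Ab * θ₂)
        = -(θ₂ * Ab * S + S * (Ab * θ₂)) - (θ₂ * Ab * S + S * (Ab * θ₂)) := by
      noncomm_ring
    rw [key, neg_zero, sub_zero] at hd
    exact sub_eq_zero.mp hd
  have c3 : ∀ X : Matrix (Fin n) (Fin n) ℝ, X * (1 + Ab * θ₂) * (1 + Ab * θ₂)⁻¹ = X :=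
    fun X => Matrix.mul_nonsing_inv_cancel_right _ X h1
  have c4 : ∀ X : Matrix (Fin n) (Fin n) ℝ, (1 - θ₂ * Ab)⁻¹ * ((1 - θ₂ * Ab) * X) = X :=
    fun X => Matrix.nonsing_inv_mul_cancel_left _ X h2
  have eq1 : S * (1 - Ab * θ₂) * (1 + Ab * θ₂)⁻¹
      = (1 - θ₂ * Ab)⁻¹ * (1 + θ₂ * Ab) * S := by
    calc S * (1 - Ab * θ₂) * (1 + Ab * θ₂)⁻¹
        = (1 - θ₂ * Ab)⁻¹ * ((1 - θ₂ * Ab) * S * (1 - Ab * θ₂)) * (1 + Ab * θ₂)⁻¹ := by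
          rw [Matrix.mul_assoc (1 - θ₂ * Ab) S (1 - Ab * θ₂), c4]
      _ = (1 - θ₂ * Ab)⁻¹ * ((1 + θ₂ * Ab) * S * (1 + Ab * θ₂)) * (1 + Ab * θ₂)⁻¹ := by
          rw [main']
      _ = (1 - θ₂ * Ab)⁻¹ * (1 + θ₂ * Ab) * S := by
          simp only [← Matrix.mul_assoc]
          exact c3 _
  have hfirst : S * (1 + Ab * θ₂ᵀ) * (1 + Ab * θ₂)⁻¹
      = (1 - θ₂ * Ab)⁻¹ * (1 - θ₂ᵀ * Ab) * S := by
    rw [hθ]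
    simp only [Matrix.mul_neg, Matrix.neg_mul, ← sub_eq_add_neg, sub_neg_eq_add]
    exact eq1
  refine ⟨hfirst, ?_⟩
  -- symmetry of the structure constant matrix
  have hSsymm : Sᵀ = S := by
    rw [hSdef, Matrix.transpose_add, Matrix.transpose_nonsing_inv,
      Matrix.transpose_nonsing_inv, hMdef, hNdef, Matrix.transpose_sub,
      Matrix.transpose_sub, hAa.eq, hAb.eq, hAc.eq]
  rw [Matrix.IsSymm, hfirst]
  rw [hθ]
  simp only [Matrix.mul_neg, Matrix.neg_mul, ← sub_eq_add_neg, sub_neg_eq_add]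
  rw [Matrix.transpose_mul, Matrix.transpose_mul, hSsymm,
    Matrix.transpose_nonsing_inv]
  have ht1 : (1 - θ₂ * Ab)ᵀ = 1 + Ab * θ₂ := by
    rw [Matrix.transpose_sub, Matrix.transpose_one, Matrix.transpose_mul, hθ, hAb.eq,
      Matrix.mul_neg, sub_neg_eq_add]
  have ht2 : (1 + θ₂ * Ab)ᵀ = 1 - Ab * θ₂ := by
    rw [Matrix.transpose_add, Matrix.transpose_one, Matrix.transpose_mul, hθ, hAb.eq,
      Matrix.mul_neg, ← sub_eq_add_neg]
  rw [ht1, ht2, ← Matrix.mul_assoc]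
  exact eq1
end

section
/- Let A_a, A_b, A_c be invertible real symmetric n×n matrices such that A_ab := A_b − A_a and A_bc := A_c − A_b are invertible, and let θ₃ be a real antisymmetric n×n matrix with A_a θ₃ A_a = A_b θ₃ A_b = A_c θ₃ A_c. Then, over ℂ, (A_ab⁻¹ + A_bc⁻¹)(1_n − √-1 A_b θ₃) = (1_n + √-1 θ₃ A_b)(A_ab⁻¹ + A_bc⁻¹); in particular the matrix (A_ab⁻¹ + A_bc⁻¹)(1_n − √-1 A_b θ₃) is symmetric. -/
open Matrix

private lemma theta3_key {n : ℕ} (A B T : Matrix (Fin n) (Fin n) ℂ)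
    (hX : IsUnit (B - A).det) (h : A * T * A = B * T * B) :
    (B - A)⁻¹ * (B * T) + (T * B) * (B - A)⁻¹ = T := by
  set X := B - A with hXdef
  have h0 : B * T * X = -(X * (T * A)) := by
    have : B * T * X + X * (T * A) = B * T * B - A * T * A := by
      simp only [hXdef, mul_sub, sub_mul, mul_assoc]
      abel
    rw [h, sub_self] at this
    linear_combination (norm := noncomm_ring) this
  have h1 : X⁻¹ * (B * T) = -((T * A) * X⁻¹) := by
    have := congrArg (fun M => X⁻¹ * M * X⁻¹) h0
    simpa [mul_assoc, Matrix.mul_nonsing_inv _ hX,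
      Matrix.nonsing_inv_mul_cancel_left _ _ hX,
      Matrix.mul_nonsing_inv_cancel_right _ _ hX] using this
  have hTB : T * B = T * A + T * X := by
    rw [hXdef]; noncomm_ring
  rw [h1, hTB, add_mul, Matrix.mul_nonsing_inv_cancel_right _ _ hX]
  abel

private lemma theta3_key2 {n : ℕ} (B C T : Matrix (Fin n) (Fin n) ℂ)
    (hY : IsUnit (C - B).det) (h : B * T * B = C * T * C) :
    (C - B)⁻¹ * (B * T) + (T * B) * (C - B)⁻¹ = -T := by
  set Y := C - B with hYdef
  have h0 : C * T * Y = -(Y * (T * B)) := by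
    have : C * T * Y + Y * (T * B) = C * T * C - B * T * B := by
      simp only [hYdef, mul_sub, sub_mul, mul_assoc]
      abel
    rw [← h, sub_self] at this
    linear_combination (norm := noncomm_ring) this
  have h1 : Y⁻¹ * (C * T) = -((T * B) * Y⁻¹) := by
    have := congrArg (fun M => Y⁻¹ * M * Y⁻¹) h0
    simpa [mul_assoc, Matrix.mul_nonsing_inv _ hY,
      Matrix.nonsing_inv_mul_cancel_left _ _ hY,
      Matrix.mul_nonsing_inv_cancel_right _ _ hY] using this
  have hBT : B * T = C * T - Y * T := by
    rw [hYdef]; noncomm_ring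
  rw [hBT, mul_sub, h1, Matrix.nonsing_inv_mul_cancel_left _ _ hY]
  abel

/-- In the Type θ₃ deformation, under the DG condition
`A_a θ₃ A_a = A_b θ₃ A_b = A_c θ₃ A_c`, the complex matrix
`(A_ab⁻¹ + A_bc⁻¹)(1 − i A_b θ₃)` appearing in the composition formula of
theta vectors satisfies the displayed identity; in particular it is symmetric. -/
theorem typeTheta3_structureConstant_symm {n : ℕ}
    (Aa Ab Ac θ₃ : Matrix (Fin n) (Fin n) ℝ)
    (hAa : Aa.IsSymm) (hAb : Ab.IsSymm) (hAc : Ac.IsSymm)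
    (hAaInv : IsUnit Aa.det) (hAbInv : IsUnit Ab.det) (hAcInv : IsUnit Ac.det)
    (hAab : IsUnit (Ab - Aa).det) (hAbc : IsUnit (Ac - Ab).det)
    (hθ : θ₃ᵀ = -θ₃)
    (hcd1 : Aa * θ₃ * Aa = Ab * θ₃ * Ab) (hcd2 : Ab * θ₃ * Ab = Ac * θ₃ * Ac) :
    (((Ab - Aa).map Complex.ofReal)⁻¹ + ((Ac - Ab).map Complex.ofReal)⁻¹) *
        (1 - Complex.I • ((Ab * θ₃).map Complex.ofReal))
      = (1 + Complex.I • ((θ₃ * Ab).map Complex.ofReal)) *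
        (((Ab - Aa).map Complex.ofReal)⁻¹ + ((Ac - Ab).map Complex.ofReal)⁻¹) ∧
    ((((Ab - Aa).map Complex.ofReal)⁻¹ + ((Ac - Ab).map Complex.ofReal)⁻¹) *
        (1 - Complex.I • ((Ab * θ₃).map Complex.ofReal))).IsSymm := by
  -- pass to complex matrices via the ring hom
  have mapmul : ∀ M N : Matrix (Fin n) (Fin n) ℝ,
      (M * N).map Complex.ofReal = M.map Complex.ofReal * N.map Complex.ofReal := by
    intro M N
    exact Matrix.map_mul (f := Complex.ofRealHom)
  set A := Aa.map Complex.ofReal with hA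
  set B := Ab.map Complex.ofReal with hB
  set C := Ac.map Complex.ofReal with hC
  set T := θ₃.map Complex.ofReal with hT
  have hmapX : (Ab - Aa).map Complex.ofReal = B - A := by
    simp [hA, hB, Matrix.map_sub]
  have hmapY : (Ac - Ab).map Complex.ofReal = C - B := by
    simp [hB, hC, Matrix.map_sub]
  have hdet : ∀ M : Matrix (Fin n) (Fin n) ℝ, IsUnit M.det →
      IsUnit (M.map Complex.ofReal).det := by
    intro M h
    have e := RingHom.map_det Complex.ofRealHom M
    rw [RingHom.mapMatrix_apply] at e
    have e2 : (M.map Complex.ofReal).det = Complex.ofRealHom M.det := e.symm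
    rw [e2]
    exact h.map Complex.ofRealHom
  have hXdet : IsUnit (B - A).det := by rw [← hmapX]; exact hdet _ hAab
  have hYdet : IsUnit (C - B).det := by rw [← hmapY]; exact hdet _ hAbc
  have hc1 : A * T * A = B * T * B := by
    rw [hA, hB, hT, ← mapmul, ← mapmul, ← mapmul, ← mapmul, hcd1]
  have hc2 : B * T * B = C * T * C := by
    rw [hB, hC, hT, ← mapmul, ← mapmul, ← mapmul, ← mapmul, hcd2]
  have k1 := theta3_key A B T hXdet hc1
  have k2 := theta3_key2 B C T hYdet hc2
  set M := (B - A)⁻¹ + (C - B)⁻¹ with hM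
  have hkey : M * (B * T) = -((T * B) * M) := by
    have : M * (B * T) + (T * B) * M = 0 := by
      have : ((B - A)⁻¹ * (B * T) + (T * B) * (B - A)⁻¹)
          + ((C - B)⁻¹ * (B * T) + (T * B) * (C - B)⁻¹) = T + -T := by
        rw [k1, k2]
      rw [add_neg_cancel] at this
      rw [hM, add_mul, mul_add]
      linear_combination (norm := noncomm_ring) this
    linear_combination (norm := noncomm_ring) this
  have hBT : (Ab * θ₃).map Complex.ofReal = B * T := by rw [hB, hT, ← mapmul]
  have hTB : (θ₃ * Ab).map Complex.ofReal = T * B := by rw [hB, hT, ← mapmul]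
  have main : M * (1 - Complex.I • (B * T)) = (1 + Complex.I • (T * B)) * M := by
    rw [mul_sub, mul_one, Matrix.mul_smul, hkey, smul_neg, sub_neg_eq_add, add_mul,
      one_mul, Matrix.smul_mul]
  constructor
  · rw [hmapX, hmapY, hBT, hTB]
    exact main
  · rw [hmapX, hmapY, hBT]
    have hMsymm : Mᵀ = M := by
      have hXs : (B - A)ᵀ = B - A := by
        rw [Matrix.transpose_sub, hA, hB, ← Matrix.transpose_map, ← Matrix.transpose_map,
          hAb.eq, hAa.eq]
      have hYs : (C - B)ᵀ = C - B := by
        rw [Matrix.transpose_sub, hB, hC, ← Matrix.transpose_map, ← Matrix.transpose_map,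
          hAc.eq, hAb.eq]
      rw [hM, Matrix.transpose_add, Matrix.transpose_nonsing_inv, Matrix.transpose_nonsing_inv,
        hXs, hYs]
    have hθ' : ∀ i j, θ₃ j i = -θ₃ i j := fun i j => by
      have := congrFun (congrFun hθ i) j
      simpa using this
    have hTt : Tᵀ = -T := by
      rw [hT]
      ext i j
      simp [Matrix.map_apply, hθ' i j]
    have hBt : Bᵀ = B := by
      rw [hB, ← Matrix.transpose_map, hAb.eq]
    show (M * (1 - Complex.I • (B * T)))ᵀ = M * (1 - Complex.I • (B * T))
    rw [Matrix.transpose_mul, Matrix.transpose_sub, Matrix.transpose_one,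
      Matrix.transpose_smul, Matrix.transpose_mul, hTt, hBt, hMsymm, neg_mul,
      smul_neg, sub_neg_eq_add, ← main]
end

section
/- Let A_a, A_b, A_c be invertible real symmetric n×n matrices such that A_ab := A_b − A_a and A_bc := A_c − A_b are invertible, and let θ₁ be a real antisymmetric n×n matrix with A_a θ₁ A_a = A_b θ₁ A_b = A_c θ₁ A_c, and assume 1_n + √-1 A_b θ₁ is invertible over ℂ. Then the complex matrix (A_ab⁻¹ + A_bc⁻¹)(1_n + √-1 A_b θ₁)⁻¹ is symmetric. -/
open Matrix

/-- In the Type θ₁ deformation, under the condition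
`A_a θ₁ A_a = A_b θ₁ A_b = A_c θ₁ A_c`, the complex matrix
`(A_ab⁻¹ + A_bc⁻¹)(1 + i A_b θ₁)⁻¹` defining the Gaussian structure constants
of the composition of theta vectors is symmetric. -/
theorem typeTheta1_structureConstant_symm {n : ℕ}
    (Aa Ab Ac θ₁ : Matrix (Fin n) (Fin n) ℝ)
    (hAa : Aa.IsSymm) (hAb : Ab.IsSymm) (hAc : Ac.IsSymm)
    (hAaInv : IsUnit Aa.det) (hAbInv : IsUnit Ab.det) (hAcInv : IsUnit Ac.det)
    (hAab : IsUnit (Ab - Aa).det) (hAbc : IsUnit (Ac - Ab).det)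
    (hθ : θ₁ᵀ = -θ₁)
    (hcd1 : Aa * θ₁ * Aa = Ab * θ₁ * Ab) (hcd2 : Ab * θ₁ * Ab = Ac * θ₁ * Ac)
    (hP : IsUnit (1 + Complex.I • ((Ab * θ₁).map Complex.ofReal) :
      Matrix (Fin n) (Fin n) ℂ).det) :
    ((((Ab - Aa).map Complex.ofReal)⁻¹ + ((Ac - Ab).map Complex.ofReal)⁻¹) *
      (1 + Complex.I • ((Ab * θ₁).map Complex.ofReal) :
        Matrix (Fin n) (Fin n) ℂ)⁻¹).IsSymm := by
  have hfc : Complex.ofReal = ⇑Complex.ofRealHom := rfl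
  set f := Complex.ofRealHom with hf
  set A : Matrix (Fin n) (Fin n) ℂ := Aa.map f with hA
  set B : Matrix (Fin n) (Fin n) ℂ := Ab.map f with hB
  set C : Matrix (Fin n) (Fin n) ℂ := Ac.map f with hC
  set T : Matrix (Fin n) (Fin n) ℂ := θ₁.map f with hT
  have hDmap : (Ab - Aa).map Complex.ofReal = B - A := by
    rw [hfc, hA, hB]; ext i j; simp
  have hEmap : (Ac - Ab).map Complex.ofReal = C - B := by
    rw [hfc, hB, hC]; ext i j; simp
  have hBTmap : (Ab * θ₁).map Complex.ofReal = B * T := by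
    rw [hfc, hB, hT, Matrix.map_mul]
  set D : Matrix (Fin n) (Fin n) ℂ := B - A with hD
  set E : Matrix (Fin n) (Fin n) ℂ := C - B with hE
  have hDdet : IsUnit D.det := by
    rw [← hDmap, hfc]
    have hdm : ((Ab - Aa).map ⇑f).det = f (Ab - Aa).det :=
      (RingHom.map_det f (Ab - Aa)).symm
    rw [hdm]
    simpa [hf, isUnit_iff_ne_zero, Complex.ofReal_ne_zero] using
      (isUnit_iff_ne_zero.mp hAab)
  have hEdet : IsUnit E.det := by
    rw [← hEmap, hfc]
    have hdm : ((Ac - Ab).map ⇑f).det = f (Ac - Ab).det :=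
      (RingHom.map_det f (Ac - Ab)).symm
    rw [hdm]
    simpa [hf, isUnit_iff_ne_zero, Complex.ofReal_ne_zero] using
      (isUnit_iff_ne_zero.mp hAbc)
  have hcd1' : A * T * A = B * T * B := by
    rw [hA, hB, hT, ← Matrix.map_mul, ← Matrix.map_mul, ← Matrix.map_mul,
      ← Matrix.map_mul, hcd1]
  have hcd2' : B * T * B = C * T * C := by
    rw [hB, hC, hT, ← Matrix.map_mul, ← Matrix.map_mul, ← Matrix.map_mul,
      ← Matrix.map_mul, hcd2]
  have hTt : Tᵀ = -T := by
    rw [hT, ← Matrix.transpose_map, hθ]; ext i j; simp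
  have hBt : Bᵀ = B := by
    rw [hB, ← Matrix.transpose_map, hAb.eq]
  have hDt : Dᵀ = D := by
    rw [hD, Matrix.transpose_sub, hB, hA, ← Matrix.transpose_map,
      ← Matrix.transpose_map, hAb.eq, hAa.eq]
  have hEt : Eᵀ = E := by
    rw [hE, Matrix.transpose_sub, hB, hC, ← Matrix.transpose_map,
      ← Matrix.transpose_map, hAb.eq, hAc.eq]
  -- key algebraic identities
  have h1 : B * T * D + D * T * B = D * T * D := by
    rw [hD]
    simp only [Matrix.sub_mul, Matrix.mul_sub]
    rw [hcd1']
    abel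
  have h2 : B * T * E + E * T * B = -(E * T * E) := by
    rw [hE]
    simp only [Matrix.sub_mul, Matrix.mul_sub]
    rw [← hcd2']
    abel
  have hDl := Matrix.nonsing_inv_mul D hDdet
  have hDr := Matrix.mul_nonsing_inv D hDdet
  have hEl := Matrix.nonsing_inv_mul E hEdet
  have hEr := Matrix.mul_nonsing_inv E hEdet
  have h1' : D⁻¹ * (B * T) + (T * B) * D⁻¹ = T := by
    have e : D⁻¹ * (B * T * D + D * T * B) * D⁻¹ = D⁻¹ * (D * T * D) * D⁻¹ := by
      rw [h1]
    have l1 : D⁻¹ * (B * T * D + D * T * B) * D⁻¹ =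
        D⁻¹ * (B * T) * (D * D⁻¹) + (D⁻¹ * D) * ((T * B) * D⁻¹) := by
      noncomm_ring
    have l2 : D⁻¹ * (D * T * D) * D⁻¹ = (D⁻¹ * D) * T * (D * D⁻¹) := by
      noncomm_ring
    rw [l1, l2, hDl, hDr] at e
    simpa using e
  have h2' : E⁻¹ * (B * T) + (T * B) * E⁻¹ = -T := by
    have e : E⁻¹ * (B * T * E + E * T * B) * E⁻¹ = E⁻¹ * (-(E * T * E)) * E⁻¹ := by
      rw [h2]
    have l1 : E⁻¹ * (B * T * E + E * T * B) * E⁻¹ =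
        E⁻¹ * (B * T) * (E * E⁻¹) + (E⁻¹ * E) * ((T * B) * E⁻¹) := by
      noncomm_ring
    have l2 : E⁻¹ * (-(E * T * E)) * E⁻¹ = -((E⁻¹ * E) * T * (E * E⁻¹)) := by
      noncomm_ring
    rw [l1, l2, hEl, hEr] at e
    simpa using e
  set M := D⁻¹ + E⁻¹ with hM
  have hkey : M * (B * T) + (T * B) * M = 0 := by
    have expand : M * (B * T) + (T * B) * M =
        (D⁻¹ * (B * T) + (T * B) * D⁻¹) + (E⁻¹ * (B * T) + (T * B) * E⁻¹) := by
      rw [hM]; noncomm_ring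
    rw [expand, h1', h2', add_neg_cancel]
  have hMt : Mᵀ = M := by
    rw [hM, Matrix.transpose_add, Matrix.transpose_nonsing_inv,
      Matrix.transpose_nonsing_inv, hDt, hEt]
  set P : Matrix (Fin n) (Fin n) ℂ := 1 + Complex.I • (B * T) with hPdef
  have hPgoal : (1 + Complex.I • ((Ab * θ₁).map Complex.ofReal) :
      Matrix (Fin n) (Fin n) ℂ) = P := by rw [hPdef, hBTmap]
  have hPdet : IsUnit P.det := by rw [hPdef, ← hBTmap]; exact hP
  have hPt : Pᵀ = 1 - Complex.I • (T * B) := by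
    rw [hPdef, Matrix.transpose_add, Matrix.transpose_one, Matrix.transpose_smul,
      Matrix.transpose_mul, hTt, hBt, Matrix.neg_mul, smul_neg, sub_eq_add_neg]
  have hPtdet : IsUnit (Pᵀ).det := by rw [Matrix.det_transpose]; exact hPdet
  have hMP : M * P = Pᵀ * M := by
    have hk : M * (B * T) = -((T * B) * M) := eq_neg_of_add_eq_zero_left hkey
    rw [hPt, hPdef, Matrix.mul_add, Matrix.mul_one, Matrix.mul_smul, hk, smul_neg,
      Matrix.sub_mul, Matrix.one_mul, Matrix.smul_mul, sub_eq_add_neg]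
  -- conclude symmetry
  rw [hPgoal, hDmap, hEmap]
  show (M * P⁻¹)ᵀ = M * P⁻¹
  have key : M * P⁻¹ = (Pᵀ)⁻¹ * M := by
    have h1 : (Pᵀ)⁻¹ * (M * P) * P⁻¹ = (Pᵀ)⁻¹ * (Pᵀ * M) * P⁻¹ := by rw [hMP]
    have l1 : (Pᵀ)⁻¹ * (M * P) * P⁻¹ = (Pᵀ)⁻¹ * M * (P * P⁻¹) := by noncomm_ring
    have l2 : (Pᵀ)⁻¹ * (Pᵀ * M) * P⁻¹ = ((Pᵀ)⁻¹ * Pᵀ) * M * P⁻¹ := by noncomm_ring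
    rw [l1, l2, Matrix.mul_nonsing_inv P hPdet, Matrix.nonsing_inv_mul Pᵀ hPtdet] at h1
    simpa using h1.symm
  rw [Matrix.transpose_mul, Matrix.transpose_nonsing_inv, hMt, key]
end

section
/- Let A be a real symmetric n×n matrix and θ₂ a real n×n matrix such that 1_n + A θ₂ and 1_n + A θ₂ᵗ are invertible. Consider the 2n×2n block matrices θ := [[0, −θ₂],[θ₂ᵗ, 0]] and F₀ := [[0, A],[−A, 0]]. Then F₀ θ + 1_{2n} is invertible and θ (F₀ θ + 1_{2n})⁻¹ = [[0, −θ₂(1_n + A θ₂)⁻¹],[θ₂ᵗ(1_n + A θ₂ᵗ)⁻¹, 0]]. -/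
open Matrix

/-- For Type θ₂ noncommutativity, the parameter of the
endomorphism torus is `θ (F₀ θ + 1)⁻¹ = [[0, −θ₂(1+Aθ₂)⁻¹],[θ₂ᵗ(1+Aθ₂ᵗ)⁻¹, 0]]`. -/
theorem typeTheta2_endomorphism_param {n : ℕ} (A θ₂ : Matrix (Fin n) (Fin n) ℝ)
    (hA : A.IsSymm)
    (h1 : IsUnit (1 + A * θ₂).det) (h2 : IsUnit (1 + A * θ₂ᵀ).det)
    (θ F₀ : Matrix (Fin n ⊕ Fin n) (Fin n ⊕ Fin n) ℝ)
    (hθ : θ = fromBlocks 0 (-θ₂) θ₂ᵀ 0)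
    (hF₀ : F₀ = fromBlocks 0 A (-A) 0) :
    IsUnit (F₀ * θ + 1).det ∧
    θ * (F₀ * θ + 1)⁻¹
      = fromBlocks 0 (-(θ₂ * (1 + A * θ₂)⁻¹)) (θ₂ᵀ * (1 + A * θ₂ᵀ)⁻¹) 0 := by
  have hblock : F₀ * θ + 1 = fromBlocks (1 + A * θ₂ᵀ) 0 0 (1 + A * θ₂) := by
    rw [hθ, hF₀, fromBlocks_multiply, ← fromBlocks_one, fromBlocks_add]
    congr 1 <;> simp [add_comm]
  have hdet : IsUnit (F₀ * θ + 1).det := by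
    rw [hblock, det_fromBlocks_zero₂₁]
    exact h2.mul h1
  have hinv : (F₀ * θ + 1)⁻¹ = fromBlocks (1 + A * θ₂ᵀ)⁻¹ 0 0 (1 + A * θ₂)⁻¹ := by
    apply inv_eq_right_inv
    rw [hblock, fromBlocks_multiply, mul_nonsing_inv _ h2, mul_nonsing_inv _ h1]
    simp [← fromBlocks_one]
  refine ⟨hdet, ?_⟩
  rw [hinv, hθ, fromBlocks_multiply]
  simp
end

section
/- Let A be a real symmetric n×n matrix and θ₃ a real n×n matrix (in particular this covers θ₃ antisymmetric). Consider the 2n×2n block matrices θ := [[0, 0],[0, θ₃]] and F₀ := [[0, A],[−A, 0]]. Then F₀ θ + 1_{2n} is invertible and θ (F₀ θ + 1_{2n})⁻¹ = θ. -/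
open Matrix

/-- Type θ₃ noncommutativity is preserved by passing to the
endomorphism algebra: `θ (F₀ θ + 1)⁻¹ = θ` for `θ = [[0,0],[0,θ₃]]` and
`F₀ = [[0,A],[−A,0]]`. -/
theorem typeTheta3_endomorphism_param {n : ℕ} (A θ₃ : Matrix (Fin n) (Fin n) ℝ)
    (hA : A.IsSymm)
    (θ F₀ : Matrix (Fin n ⊕ Fin n) (Fin n ⊕ Fin n) ℝ)
    (hθ : θ = fromBlocks 0 0 0 θ₃)
    (hF₀ : F₀ = fromBlocks 0 A (-A) 0) :
    IsUnit (F₀ * θ + 1).det ∧ θ * (F₀ * θ + 1)⁻¹ = θ := by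
  have hM : F₀ * θ + 1 = fromBlocks 1 (A * θ₃) 0 1 := by
    subst hθ hF₀
    rw [Matrix.fromBlocks_multiply]
    rw [show (1 : Matrix (Fin n ⊕ Fin n) (Fin n ⊕ Fin n) ℝ) = fromBlocks 1 0 0 1 from (Matrix.fromBlocks_one).symm, Matrix.fromBlocks_add]
    simp
  have hinv : (F₀ * θ + 1)⁻¹ = fromBlocks 1 (-(A * θ₃)) 0 1 := by
    rw [hM]
    apply Matrix.inv_eq_right_inv
    rw [Matrix.fromBlocks_multiply, ← Matrix.fromBlocks_one]
    simp
  constructor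
  · rw [hM, Matrix.det_fromBlocks_zero₂₁]
    simp
  · rw [hinv, hθ, Matrix.fromBlocks_multiply]
    simp
end
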